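/- arXiv:2507.16232 — 2 statements merged into one kernel-verified Lean document; each statement's English description precedes it below -/
import Mathlib

section
/- If T is abelian and the flow (X,T) is proximal, then the induced flow (E(X),T) is proximal; conversely, if (X,T) is point-transitive and (E(X),T) is proximal, then (X,T) is proximal. -/
/-!
In a compact Hausdorff proximal flow every finite set `S` is collapsed by some `p ∈ E(X)`: if `p`
collapses `S ∋ b`, a diagonal point in the orbit closure of `(p b, p a)` is the image of some `q`
in the orbit closure of `p`, and `q` collapses `insert a S`. Hence every finite set is
simultaneously proximal, and since entourages of `X → X` only see finitely many coordinates, any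
two maps `X → X` are proximal. Conversely, evaluation at a point with dense orbit is an
equivariant, uniformly continuous map from `E(X)` onto `X`, and such maps preserve proximality.
-/

open Filter Set Topology Uniformity

/-- The enveloping semigroup of the flow: the pointwise closure of the translation
maps `x ↦ t • x` inside `X → X` (with the product topology). -/
def envSemigroup (T X : Type*) [SMul T X] [TopologicalSpace X] : Set (X → X) :=
  closure (Set.range fun t : T => fun x : X => t • x)

/-- `(x, y)` is a proximal pair for the `T`-action. -/
def ProxPair (T : Type*) {X : Type*} [SMul T X] [UniformSpace X] (x y : X) : Prop :=
  ∀ U ∈ 𝓤 X, ∃ t : T, (t • x, t • y) ∈ U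

section Envelope

variable {T X : Type*} [Monoid T] [TopologicalSpace X] [MulAction T X]

lemma id_mem_envSemigroup : (id : X → X) ∈ envSemigroup T X :=
  subset_closure ⟨1, funext fun x => one_smul T x⟩

lemma smul_mem_envSemigroup [ContinuousConstSMul T X] (t : T) {p : X → X}
    (hp : p ∈ envSemigroup T X) : t • p ∈ envSemigroup T X := by
  refine map_mem_closure (continuous_const_smul t) hp ?_
  rintro _ ⟨s, rfl⟩
  exact ⟨t * s, funext fun x => mul_smul t s x⟩

lemma closure_range_smul_subset_envSemigroup [ContinuousConstSMul T X] {p : X → X}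
    (hp : p ∈ envSemigroup T X) : closure (range fun t : T => t • p) ⊆ envSemigroup T X :=
  closure_minimal (range_subset_iff.2 fun t => smul_mem_envSemigroup t hp) isClosed_closure

end Envelope

section Proximal

variable {T X : Type*} [SMul T X] [UniformSpace X]

lemma ProxPair.map {Y : Type*} [UniformSpace Y] [SMul T Y] {f : X → Y}
    (hf : UniformContinuous f) (hfT : ∀ (t : T) x, f (t • x) = t • f x) {x y : X}
    (h : ProxPair T x y) : ProxPair T (f x) (f y) := by
  intro U hU
  obtain ⟨t, ht⟩ := h _ (hf hU)
  exact ⟨t, by rw [← hfT, ← hfT]; exact ht⟩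

lemma ProxPair.exists_diag_mem_closure_orbit [CompactSpace X] [T2Space X] {x y : X}
    (h : ProxPair T x y) :
    ∃ w : X, (w, w) ∈ closure (range fun t : T => (t • x, t • y)) := by
  set A := range fun t : T => (t • x, t • y)
  have : (𝓤 X ⊓ 𝓟 A).NeBot := by
    refine inf_principal_neBot_iff.2 fun U hU => ?_
    obtain ⟨t, ht⟩ := h U hU
    exact ⟨_, ht, t, rfl⟩
  obtain ⟨⟨w, w'⟩, hw⟩ := exists_clusterPt_of_compactSpace (𝓤 X ⊓ 𝓟 A)
  obtain rfl : w = w' := eq_of_clusterPt_uniformity (hw.mono inf_le_left)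
  exact ⟨w, mem_closure_iff_clusterPt.2 (hw.mono inf_le_right)⟩

lemma ProxPair.of_forall_finset {ι : Type*} {p q : ι → X}
    (h : ∀ I : Finset ι, ∀ W ∈ 𝓤 X, ∃ t : T, ∀ i ∈ I, (t • p i, t • q i) ∈ W) :
    ProxPair T p q := by
  intro U hU
  obtain ⟨I, hI, V, hV, -, rfl, -⟩ := Filter.mem_iInf'.1 (Pi.uniformity (fun _ : ι => X) ▸ hU)
  choose W hW hWV using fun i => Filter.mem_comap.1 (hV i)
  obtain ⟨t, ht⟩ := h hI.toFinset (⋂ i ∈ I, W i) ((Filter.biInter_mem hI).2 fun i _ => hW i)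
  refine ⟨t, mem_iInter₂.2 fun i hi => hWV i ?_⟩
  exact mem_iInter₂.1 (ht i (hI.mem_toFinset.2 hi)) i hi

end Proximal

section ProximalFlow

variable {T X : Type*} [Monoid T] [UniformSpace X] [CompactSpace X] [T2Space X] [MulAction T X]

lemma exists_mem_envSemigroup_apply_eq {x₀ : X} (hx₀ : Dense (range fun t : T => t • x₀))
    (z : X) : ∃ p ∈ envSemigroup T X, p x₀ = z := by
  have himage : (fun f : X → X => f x₀) '' envSemigroup T X = univ := by
    rw [envSemigroup, image_closure_of_isCompact isClosed_closure.isCompact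
      (continuous_apply x₀).continuousOn, ← range_comp]
    exact hx₀.closure_eq
  exact eq_univ_iff_forall.1 himage z

variable [ContinuousConstSMul T X]

lemma exists_mem_envSemigroup_forall_eq (hprox : ∀ x y : X, ProxPair T x y) (S : Finset X) :
    ∃ p ∈ envSemigroup T X, ∀ a ∈ S, ∀ b ∈ S, p a = p b := by
  classical
  induction S using Finset.induction_on with
  | empty => exact ⟨id, id_mem_envSemigroup, by simp⟩
  | @insert a S _ ih =>
    obtain ⟨p, hp, hpS⟩ := ih
    obtain rfl | ⟨b, hb⟩ := S.eq_empty_or_nonempty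
    · exact ⟨p, hp, by simp⟩
    obtain ⟨w, hw⟩ := (hprox (p b) (p a)).exists_diag_mem_closure_orbit
    have himage : (fun f : X → X => (f b, f a)) '' closure (range fun t : T => t • p) =
        closure (range fun t : T => (t • p b, t • p a)) := by
      rw [image_closure_of_isCompact isClosed_closure.isCompact
        ((continuous_apply b).prodMk (continuous_apply a)).continuousOn, ← range_comp]
      rfl
    obtain ⟨q, hq, hqw⟩ := himage ▸ hw
    obtain ⟨hqb, hqa⟩ := Prod.ext_iff.1 hqw
    have hqS : ∀ z ∈ S, q z = q b := by
      intro z hz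
      refine closure_minimal (t := {f : X → X | f z = f b}) ?_
        (isClosed_eq (continuous_apply z) (continuous_apply b)) hq
      rintro _ ⟨t, rfl⟩
      exact congrArg (t • ·) (hpS z hz b hb)
    have hqw : ∀ z ∈ insert a S, q z = w := by
      simp only [Finset.mem_insert, forall_eq_or_imp]
      exact ⟨hqa, fun z hz => (hqS z hz).trans hqb⟩
    exact ⟨q, closure_range_smul_subset_envSemigroup hp hq, fun x hx y hy =>
      (hqw x hx).trans (hqw y hy).symm⟩

lemma exists_smul_forall_mem_entourage (hprox : ∀ x y : X, ProxPair T x y) (S : Finset X)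
    {W : Set (X × X)} (hW : W ∈ 𝓤 X) : ∃ t : T, ∀ a ∈ S, ∀ b ∈ S, (t • a, t • b) ∈ W := by
  obtain ⟨p, hp, hpS⟩ := exists_mem_envSemigroup_forall_eq hprox S
  have hnear : ∀ᶠ f in 𝓝 p, ∀ a ∈ S, ∀ b ∈ S, (f a, f b) ∈ W := by
    simp only [Filter.eventually_all_finset]
    intro a ha b hb
    have hab := ((continuous_apply a).prodMk (continuous_apply b)).tendsto p
    rw [hpS a ha b hb] at hab
    exact hab (nhds_le_uniformity _ hW)
  obtain ⟨_, hf, t, rfl⟩ := (hnear.and_frequently (mem_closure_iff_frequently.1 hp)).exists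
  exact ⟨t, hf⟩

end ProximalFlow

theorem env_proximal_general {T X : Type*} [CommGroup T] [TopologicalSpace T]
    [UniformSpace X] [CompactSpace X] [T2Space X]
    [MulAction T X] [ContinuousSMul T X] :
    ((∀ x y : X, ProxPair T x y) →
        ∀ p ∈ envSemigroup T X, ∀ q ∈ envSemigroup T X, ProxPair T p q) ∧
      ((∃ x₀ : X, Dense (Set.range fun t : T => t • x₀)) →
        (∀ p ∈ envSemigroup T X, ∀ q ∈ envSemigroup T X, ProxPair T p q) →
        ∀ x y : X, ProxPair T x y) := by
  constructor
  · intro hprox p _ q _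
    refine ProxPair.of_forall_finset fun I W hW => ?_
    classical
    obtain ⟨t, ht⟩ := exists_smul_forall_mem_entourage hprox (I.image p ∪ I.image q) hW
    exact ⟨t, fun i hi => ht _ (Finset.mem_union_left _ (Finset.mem_image_of_mem p hi))
      _ (Finset.mem_union_right _ (Finset.mem_image_of_mem q hi))⟩
  · rintro ⟨x₀, hx₀⟩ hE x y
    obtain ⟨p, hp, rfl⟩ := exists_mem_envSemigroup_apply_eq hx₀ x
    obtain ⟨q, hq, rfl⟩ := exists_mem_envSemigroup_apply_eq hx₀ y
    exact (hE p hp q hq).map (Pi.uniformContinuous_proj _ x₀) fun _ _ => rfl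

/-- If `T` is abelian and the flow `(X, T)` is proximal, then the induced flow
`(E(X), T)` (pointwise uniformity, `T` acting by left composition) is proximal;
conversely, if `(X, T)` is point-transitive and `(E(X), T)` is proximal, then
`(X, T)` is proximal. -/
theorem env_proximal {T X : Type*} [CommGroup T] [TopologicalSpace T]
    [IsTopologicalGroup T] [UniformSpace X] [CompactSpace X] [T2Space X]
    [MulAction T X] [ContinuousSMul T X] :
    ((∀ x y : X, ProxPair T x y) →
        ∀ p ∈ envSemigroup T X, ∀ q ∈ envSemigroup T X, ProxPair T p q) ∧
      ((∃ x₀ : X, Dense (Set.range fun t : T => t • x₀)) →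
        (∀ p ∈ envSemigroup T X, ∀ q ∈ envSemigroup T X, ProxPair T p q) →
        ∀ x y : X, ProxPair T x y) :=
  env_proximal_general
end

section
/- If (X,T) is a metrizable compact flow that is distal and hereditarily almost equicontinuous, then the induced flow (E(X),T) on its enveloping semigroup is equicontinuous. -/
open Filter Set Topology Uniformity

/-- Equicontinuity of the subflow on a subset `A` (with the relative uniformity). -/
def EquicontOn (T : Type*) {X : Type*} [SMul T X] [UniformSpace X] (A : Set X) : Prop :=
  ∀ V ∈ 𝓤 X, ∃ U ∈ 𝓤 X, ∀ x ∈ A, ∀ y ∈ A, (x, y) ∈ U → ∀ t : T, (t • x, t • y) ∈ V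

/-!
Distality makes every orbit closure minimal: if `z = p x` with `p` in the enveloping semigroup
`E`, the compact semigroup `E ∘ p` has an idempotent `u = q ∘ p`, and `u` identifies `x` with
`u x`, so these are proximal, hence equal, and `x = q z` lies in the orbit closure of `z`.
In a minimal orbit closure one equicontinuity point `a`, which hereditary almost
equicontinuity provides, makes every point `z` an equicontinuity point: if `s • z` is close to
`a`, then `t • y = (t s⁻¹) • (s • y)` stays close to `(t s⁻¹) • a` for all `y` near `z`. By
compactness the subflow on each orbit closure is then uniformly equicontinuous, and since `E`
carries the product uniformity and `f x` lies in the orbit closure of `x` for `f ∈ E`, so is `E`.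
-/

open MulAction
open scoped Pointwise

section Equicontinuity

variable {ι κ α β γ : Type*} [UniformSpace α] [UniformSpace β] [UniformSpace γ]

theorem equicontinuousWithinAt_iff_uniformity {F : ι → β → α} {S : Set β} {x : β} :
    EquicontinuousWithinAt F S x ↔
      ∀ V ∈ 𝓤 α, ∃ U ∈ 𝓤 β, ∀ y ∈ S, (x, y) ∈ U → ∀ i, (F i x, F i y) ∈ V := by
  rw [((nhds_basis_uniformity' (𝓤 β).basis_sets).inf_principal S).equicontinuousWithinAt_iff_left]
  simp only [mem_inter_iff, and_imp]
  exact forall₂_congr fun V _ => exists_congr fun U => and_congr_right fun _ =>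
    forall_congr' fun y => forall_comm

theorem IsCompact.uniformEquicontinuousOn_of_equicontinuousOn {F : ι → β → α} {S : Set β}
    (hS : IsCompact S) (hF : EquicontinuousOn F S) : UniformEquicontinuousOn F S := by
  rw [equicontinuousOn_iff_continuousOn] at hF
  rw [uniformEquicontinuousOn_iff_uniformContinuousOn]
  exact hS.uniformContinuousOn_of_continuous hF

theorem UniformEquicontinuousOn.comp_uniformContinuous {F : ι → β → α} {S : Set β} {g : γ → β}
    {S' : Set γ} (hF : UniformEquicontinuousOn F S) (hg : UniformContinuous g)
    (hgS : MapsTo g S' S) : UniformEquicontinuousOn (fun i => F i ∘ g) S' := by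
  rw [uniformEquicontinuousOn_iff_uniformContinuousOn] at hF ⊢
  exact hF.comp hg.uniformContinuousOn hgS

theorem uniformEquicontinuousOn_pi {F : ι → β → κ → α} {S : Set β} :
    UniformEquicontinuousOn F S ↔ ∀ k, UniformEquicontinuousOn (fun i b => F i b k) S := by
  rw [Pi.uniformSpace_eq, uniformEquicontinuousOn_iInf_rng]
  refine forall_congr' fun k => ?_
  let := UniformSpace.comap (Function.eval (β := fun _ => α) k) ‹_›
  exact (isUniformInducing_iff_uniformSpace.mpr rfl).uniformEquicontinuousOn_iff

end Equicontinuity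

theorem equicontOn_iff_uniformEquicontinuousOn {T Y : Type*} [SMul T Y] [UniformSpace Y]
    {A : Set Y} : EquicontOn T A ↔ UniformEquicontinuousOn (fun (t : T) (y : Y) => t • y) A := by
  refine forall₂_congr fun V _ => ?_
  rw [eventually_inf_principal, Filter.eventually_iff_exists_mem]
  simp only [mem_prod, and_imp, Prod.forall]
  exact exists_congr fun U => and_congr_right fun _ => ⟨fun h x y hxy hx hy => h x hx y hy hxy,
    fun h x hx y hy hxy => h x y hxy hx hy⟩

section Orbit

variable {T X : Type*} [Monoid T] [TopologicalSpace X] [MulAction T X] [ContinuousConstSMul T X]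

theorem smul_mem_closure_orbit (t : T) {x y : X} (hy : y ∈ closure (orbit T x)) :
    t • y ∈ closure (orbit T x) :=
  smul_closure_orbit_subset t x (smul_mem_smul_set hy)

theorem closure_orbit_subset_of_mem {x y : X} (hy : y ∈ closure (orbit T x)) :
    closure (orbit T y) ⊆ closure (orbit T x) :=
  closure_minimal (by rintro _ ⟨t, rfl⟩; exact smul_mem_closure_orbit t hy) isClosed_closure

end Orbit

section Envelope

theorem isCompact_envSemigroup {T X : Type*} [SMul T X] [TopologicalSpace X] [CompactSpace X] :
    IsCompact (envSemigroup T X) :=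
  isClosed_closure.isCompact

variable {T X : Type*} [Monoid T] [TopologicalSpace X] [MulAction T X]

theorem envSemigroup_eq_closure_orbit :
    envSemigroup T X = closure (orbit T (id : X → X)) := rfl

theorem apply_mem_closure_orbit {p : X → X} (hp : p ∈ envSemigroup T X) (x : X) :
    p x ∈ closure (orbit T x) :=
  map_mem_closure (f := fun p : X → X => p x) (continuous_apply x) hp
    (by rintro _ ⟨t, rfl⟩; exact ⟨t, rfl⟩)

theorem exists_mem_envSemigroup_apply_eq_s19 [CompactSpace X] [T2Space X] {x z : X}
    (hz : z ∈ closure (orbit T x)) : ∃ p ∈ envSemigroup T X, p x = z := by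
  have hclosed : IsClosed ((fun p : X → X => p x) '' envSemigroup T X) :=
    (isCompact_envSemigroup.image (continuous_apply x)).isClosed
  refine closure_minimal ?_ hclosed hz
  rintro _ ⟨t, rfl⟩
  exact ⟨fun y => t • y, subset_closure ⟨t, rfl⟩, rfl⟩

variable [ContinuousConstSMul T X]

theorem comp_mem_envSemigroup {p q : X → X} (hp : p ∈ envSemigroup T X)
    (hq : q ∈ envSemigroup T X) : p ∘ q ∈ envSemigroup T X := by
  rw [envSemigroup_eq_closure_orbit] at *
  have hmaps : MapsTo (· ∘ q) (orbit T id) (closure (orbit T id)) := by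
    rintro _ ⟨t, rfl⟩
    exact smul_mem_closure_orbit t hq
  exact isClosed_closure.closure_subset
    (map_mem_closure (f := (· ∘ q)) (continuous_pi fun x => continuous_apply (q x)) hp hmaps)

variable [CompactSpace X] [T2Space X]

theorem exists_idempotent_comp_mem_envSemigroup {p : X → X} (hp : p ∈ envSemigroup T X) :
    ∃ q ∈ envSemigroup T X, (q ∘ p) ∘ (q ∘ p) = q ∘ p := by
  let : Semigroup (X → X) := { mul := (· ∘ ·), mul_assoc := fun _ _ _ => rfl }
  have hid : id ∈ envSemigroup T X := subset_closure (mem_orbit_self id)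
  obtain ⟨_, ⟨q, hq, rfl⟩, hidem⟩ := exists_idempotent_in_compact_subsemigroup
    (fun r => continuous_pi fun x => continuous_apply (r x)) ((· ∘ p) '' envSemigroup T X)
    ⟨p, id, hid, rfl⟩ (isCompact_envSemigroup.image (continuous_pi fun x => continuous_apply (p x)))
    (by
      rintro _ ⟨q, hq, rfl⟩ _ ⟨q', hq', rfl⟩
      exact ⟨q ∘ p ∘ q', comp_mem_envSemigroup hq (comp_mem_envSemigroup hp hq'), rfl⟩)
  exact ⟨q, hq, hidem⟩

end Envelope

theorem proxPair_of_apply_eq {T X : Type*} [SMul T X] [UniformSpace X] {p : X → X}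
    (hp : p ∈ envSemigroup T X) {x y : X} (hxy : p x = p y) : ProxPair T x y := by
  intro V hV
  obtain ⟨W, hW, hWV⟩ := comp_mem_uniformity_sets hV
  have hnhds : {f : X → X | (f x, p x) ∈ W ∧ (p y, f y) ∈ W} ∈ 𝓝 p :=
    inter_mem ((continuous_apply x).continuousAt.preimage_mem_nhds (mem_nhds_right (p x) hW))
      ((continuous_apply y).continuousAt.preimage_mem_nhds (mem_nhds_left (p y) hW))
  obtain ⟨_, ⟨hx, hy⟩, t, rfl⟩ := mem_closure_iff_nhds.mp hp _ hnhds
  exact ⟨t, hWV ⟨p x, hx, hxy ▸ hy⟩⟩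

theorem mem_closure_orbit_of_distal {T X : Type*} [Monoid T] [UniformSpace X] [MulAction T X]
    [ContinuousConstSMul T X] [CompactSpace X] [T2Space X]
    (hdistal : ∀ x y : X, ProxPair T x y → x = y) {x z : X} (hz : z ∈ closure (orbit T x)) :
    x ∈ closure (orbit T z) := by
  obtain ⟨p, hp, rfl⟩ := exists_mem_envSemigroup_apply_eq_s19 hz
  obtain ⟨q, hq, hidem⟩ := exists_idempotent_comp_mem_envSemigroup hp
  have hqpx : q (p x) = x :=
    hdistal _ _ (proxPair_of_apply_eq (comp_mem_envSemigroup hq hp) (congrFun hidem x))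
  simpa [hqpx] using apply_mem_closure_orbit hq (p x)

section MinimalEquicontinuity

variable {T X : Type*} [Group T] [UniformSpace X] [MulAction T X] [ContinuousConstSMul T X]

theorem equicontinuousWithinAt_smul_of_mem_closure_orbit {A : Set X} (hA : ∀ t : T, t • A ⊆ A)
    {a z : X} (ha : EquicontinuousWithinAt (fun (t : T) (y : X) => t • y) A a) (hz : z ∈ A)
    (haz : a ∈ closure (orbit T z)) :
    EquicontinuousWithinAt (fun (t : T) (y : X) => t • y) A z := by
  intro V hV
  obtain ⟨W, hW, hWsymm, hWV⟩ := comp_symm_mem_uniformity_sets hV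
  obtain ⟨O, hO, haO, hOA⟩ := mem_nhdsWithin.mp (ha W hW)
  obtain ⟨_, hszO, s, rfl⟩ := mem_closure_iff.mp haz O hO haO
  have hclose : ∀ y ∈ A, s • y ∈ O → ∀ t : T, ((t * s⁻¹) • a, t • y) ∈ W := fun y hy hyO t => by
    simpa [smul_smul] using hOA ⟨hyO, hA s (smul_mem_smul_set hy)⟩ (t * s⁻¹)
  filter_upwards [nhdsWithin_le_nhds ((hO.preimage (continuous_const_smul s)).mem_nhds hszO),
    self_mem_nhdsWithin] with y hyO hy t
  exact hWV ⟨(t * s⁻¹) • a, hWsymm.symm _ _ (hclose z hz hszO t), hclose y hy hyO t⟩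

theorem uniformEquicontinuousOn_closure_orbit [CompactSpace X] [T2Space X]
    (hdistal : ∀ x y : X, ProxPair T x y → x = y) {x a : X} (ha : a ∈ closure (orbit T x))
    (haeq : EquicontinuousWithinAt (fun (t : T) (y : X) => t • y) (closure (orbit T x)) a) :
    UniformEquicontinuousOn (fun (t : T) (y : X) => t • y) (closure (orbit T x)) :=
  isClosed_closure.isCompact.uniformEquicontinuousOn_of_equicontinuousOn fun _ hz =>
    equicontinuousWithinAt_smul_of_mem_closure_orbit (smul_closure_orbit_subset · x) haeq hz
      (closure_orbit_subset_of_mem (mem_closure_orbit_of_distal hdistal hz) ha)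

end MinimalEquicontinuity

theorem env_equicont_of_distal_hae_general {T X : Type*} [Group T] [TopologicalSpace T]
    [UniformSpace X] [CompactSpace X] [T2Space X]
    [MulAction T X] [ContinuousSMul T X]
    (hdistal : ∀ x y : X, ProxPair T x y → x = y)
    (hhae : ∀ A : Set X, IsClosed A → (∀ t : T, ∀ x ∈ A, t • x ∈ A) →
      A ⊆ closure {x | x ∈ A ∧ ∀ V ∈ 𝓤 X, ∃ U ∈ 𝓤 X,
        ∀ y ∈ A, (x, y) ∈ U → ∀ t : T, (t • x, t • y) ∈ V}) :
    EquicontOn T (envSemigroup T X) := by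
  rw [equicontOn_iff_uniformEquicontinuousOn, uniformEquicontinuousOn_pi]
  intro x
  have hx : x ∈ closure (orbit T x) := subset_closure (mem_orbit_self x)
  obtain ⟨a, ha, haeq⟩ := closure_nonempty_iff.mp
    ⟨x, hhae _ isClosed_closure (fun t _ hy => smul_mem_closure_orbit t hy) hx⟩
  exact (uniformEquicontinuousOn_closure_orbit hdistal ha
    (equicontinuousWithinAt_iff_uniformity.mpr haeq)).comp_uniformContinuous
    (Pi.uniformContinuous_proj _ x) fun p hp => apply_mem_closure_orbit hp x

/-- If `(X, T)` is a compact metrizable flow which is distal and hereditarily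
almost equicontinuous (every closed invariant subset has a dense set of
equicontinuity points of the subflow), then the induced flow `(E(X), T)` on the
enveloping semigroup is equicontinuous. -/
theorem env_equicont_of_distal_hae {T X : Type*} [Group T] [TopologicalSpace T]
    [IsTopologicalGroup T] [UniformSpace X] [CompactSpace X] [T2Space X]
    [TopologicalSpace.MetrizableSpace X] [MulAction T X] [ContinuousSMul T X]
    (hdistal : ∀ x y : X, ProxPair T x y → x = y)
    (hhae : ∀ A : Set X, IsClosed A → (∀ t : T, ∀ x ∈ A, t • x ∈ A) →
      A ⊆ closure {x | x ∈ A ∧ ∀ V ∈ 𝓤 X, ∃ U ∈ 𝓤 X,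
        ∀ y ∈ A, (x, y) ∈ U → ∀ t : T, (t • x, t • y) ∈ V}) :
    EquicontOn T (envSemigroup T X) :=
  env_equicont_of_distal_hae_general hdistal hhae
end
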